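/- For every d ≥ 2 and c ∈ ℂ, the complement ℂ \ K_{d,c} of the filled Julia set of f_{d,c}(z) = z^d + c is connected; that is, K_{d,c} is a full compact set. -/

import Mathlib

/-!
Outside the disk of radius `‖c‖ + 2` the map `f : z ↦ z ^ d + c` at least doubles the modulus, so a
point escapes to infinity as soon as one iterate leaves that disk. Hence the complement of the
filled Julia set is the increasing union of the open sets `{z | ‖c‖ + 2 < ‖f^[n] z‖}`, each of
which contains the (connected) exterior of the disk. Each of them is connected: by the maximum
modulus principle applied to the polynomial `f^[n]`, none of its components is bounded, so every
component meets the exterior of the disk.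
-/

open Set Metric Bornology

theorem isConnected_setOf_lt_norm {E : Type*} [NormedAddCommGroup E] [NormedSpace ℝ E]
    (hE : 1 < Module.rank ℝ E) {R : ℝ} (hR : 0 ≤ R) : IsConnected {z : E | R < ‖z‖} := by
  have himage : (fun q : E × ℝ => q.2 • q.1) '' (sphere 0 1 ×ˢ Ioi R) = {z : E | R < ‖z‖} := by
    ext z
    constructor
    · rintro ⟨⟨u, t⟩, ⟨hu, ht⟩, rfl⟩
      rw [mem_sphere_zero_iff_norm] at hu
      rw [mem_Ioi] at ht
      simp only [mem_ofPred_eq, norm_smul, hu, mul_one, Real.norm_eq_abs]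
      exact ht.trans_le (le_abs_self t)
    · intro hz
      have hz0 : ‖z‖ ≠ 0 := (hR.trans_lt hz).ne'
      refine ⟨(‖z‖⁻¹ • z, ‖z‖), ⟨?_, hz⟩, ?_⟩
      · rw [mem_sphere_zero_iff_norm, norm_smul, norm_inv, norm_norm, inv_mul_cancel₀ hz0]
      · simp only [smul_smul, mul_inv_cancel₀ hz0, one_smul]
  rw [← himage]
  exact ((isConnected_sphere hE 0 zero_le_one).prod isConnected_Ioi).image _
    (by fun_prop)

section MaximumModulus

variable {E F : Type*} [NormedAddCommGroup E] [NormedSpace ℂ E] [Nontrivial E]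
  [NormedAddCommGroup F] [NormedSpace ℂ F] {p : E → F}

theorem Complex.not_isBounded_connectedComponentIn_setOf_lt_norm (hp : Differentiable ℂ p)
    {R : ℝ} {z : E} (hz : R < ‖p z‖) :
    ¬IsBounded (connectedComponentIn {w | R < ‖p w‖} z) := by
  set A := {w | R < ‖p w‖}
  set C := connectedComponentIn A z
  have hA : IsOpen A := isOpen_lt continuous_const hp.continuous.norm
  have hC : IsOpen C := hA.connectedComponentIn
  -- `C` is relatively closed in the open set `A`, so its frontier lies outside `A`.
  have hfrontier : ∀ w ∈ frontier C, ‖p w‖ ≤ R := by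
    rw [hC.frontier_eq]
    rintro w ⟨hw_closure, hw_notMem⟩
    by_contra! hw
    obtain ⟨y, hyw, hyC⟩ := mem_closure_iff.1 hw_closure _ hA.connectedComponentIn
      (mem_connectedComponentIn (F := A) hw)
    have hCw : C = connectedComponentIn A w :=
      (connectedComponentIn_eq hyC).trans (connectedComponentIn_eq hyw).symm
    exact hw_notMem (hCw ▸ mem_connectedComponentIn hw)
  intro hC_bdd
  exact (Complex.norm_le_of_forall_mem_frontier_norm_le hC_bdd hp.diffContOnCl hfrontier
    (subset_closure (mem_connectedComponentIn hz))).not_gt hz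

theorem Complex.isConnected_setOf_lt_norm (hp : Differentiable ℂ p) {R : ℝ} {S : Set E}
    (hS : IsConnected S) (hSA : S ⊆ {z | R < ‖p z‖}) (hbdd : IsBounded ({z | R < ‖p z‖} \ S)) :
    IsConnected {z | R < ‖p z‖} := by
  obtain ⟨x, hx⟩ := hS.nonempty
  refine ⟨⟨x, hSA hx⟩, isPreconnected_of_forall x fun y hy => ⟨_, connectedComponentIn_subset _ _,
    ?_, mem_connectedComponentIn hy, isPreconnected_connectedComponentIn⟩⟩
  obtain ⟨s, hsC, hsS⟩ : ∃ s ∈ connectedComponentIn {z | R < ‖p z‖} y, s ∈ S := by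
    by_contra! h
    exact Complex.not_isBounded_connectedComponentIn_setOf_lt_norm hp hy
      (hbdd.subset fun s hs => ⟨connectedComponentIn_subset _ _ hs, h s hs⟩)
  rw [connectedComponentIn_eq hsC]
  exact hS.isPreconnected.subset_connectedComponentIn hsS hSA hx

end MaximumModulus

def filledJulia (d : ℕ) (c : ℂ) : Set ℂ :=
  {z | ∃ R : ℝ, ∀ n : ℕ, ‖(fun w : ℂ => w ^ d + c)^[n] z‖ ≤ R}

section Escape

variable {d : ℕ} (hd : 2 ≤ d) (c : ℂ)
include hd

theorem two_mul_norm_le_norm_pow_add {z : ℂ} (hz : ‖c‖ + 2 ≤ ‖z‖) :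
    2 * ‖z‖ ≤ ‖z ^ d + c‖ := by
  have hz1 : 1 ≤ ‖z‖ := by linarith [norm_nonneg c]
  calc 2 * ‖z‖ ≤ ‖z‖ ^ 2 - ‖c‖ := by nlinarith [norm_nonneg c]
    _ ≤ ‖z‖ ^ d - ‖c‖ := by gcongr
    _ = ‖z ^ d‖ - ‖-c‖ := by rw [norm_pow, norm_neg]
    _ ≤ ‖z ^ d + c‖ := by simpa using norm_sub_norm_le (z ^ d) (-c)

theorem two_pow_mul_norm_le_norm_iterate {z : ℂ} (hz : ‖c‖ + 2 ≤ ‖z‖) (n : ℕ) :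
    2 ^ n * ‖z‖ ≤ ‖(fun w : ℂ => w ^ d + c)^[n] z‖ := by
  induction n with
  | zero => simp
  | succ n ih =>
    have hnorm : ‖z‖ ≤ 2 ^ n * ‖z‖ :=
      le_mul_of_one_le_left (norm_nonneg z) (one_le_pow₀ one_le_two)
    rw [Function.iterate_succ_apply', pow_succ', mul_assoc]
    exact (mul_le_mul_of_nonneg_left ih zero_le_two).trans
      (two_mul_norm_le_norm_pow_add hd c (hz.trans (hnorm.trans ih)))

theorem norm_le_norm_iterate {z : ℂ} (hz : ‖c‖ + 2 ≤ ‖z‖) (n : ℕ) :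
    ‖z‖ ≤ ‖(fun w : ℂ => w ^ d + c)^[n] z‖ :=
  (le_mul_of_one_le_left (norm_nonneg z) (one_le_pow₀ one_le_two)).trans
    (two_pow_mul_norm_le_norm_iterate hd c hz n)

theorem compl_filledJulia_eq_iUnion :
    (filledJulia d c)ᶜ = ⋃ n : ℕ, {z | ‖c‖ + 2 < ‖(fun w : ℂ => w ^ d + c)^[n] z‖} := by
  ext z
  simp only [filledJulia, mem_compl_iff, mem_ofPred_eq, mem_iUnion, not_exists, not_forall,
    not_le]
  refine ⟨fun h => h _, fun ⟨n, hn⟩ R => ?_⟩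
  obtain ⟨k, hk⟩ := pow_unbounded_of_one_lt R one_lt_two
  refine ⟨k + n, ?_⟩
  rw [Function.iterate_add_apply]
  have hn1 : 1 ≤ ‖(fun w : ℂ => w ^ d + c)^[n] z‖ := by linarith [norm_nonneg c]
  calc R < 2 ^ k := hk
    _ ≤ 2 ^ k * ‖(fun w : ℂ => w ^ d + c)^[n] z‖ := le_mul_of_one_le_right (by positivity) hn1
    _ ≤ _ := two_pow_mul_norm_le_norm_iterate hd c hn.le k

end Escape

/-- The complement of the filled Julia set K_{d,c} of f_{d,c}(z) = z^d + c is connected;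
that is, K_{d,c} is a full compact set. -/
theorem filledJulia_compl_isConnected (d : ℕ) (hd : 2 ≤ d) (c : ℂ) :
    IsConnected {z : ℂ | ∃ R : ℝ, ∀ n : ℕ,
      ‖(fun w : ℂ => w ^ d + c)^[n] z‖ ≤ R}ᶜ := by
  change IsConnected (filledJulia d c)ᶜ
  rw [compl_filledJulia_eq_iUnion hd c]
  set f := fun w : ℂ => w ^ d + c
  have hext : IsConnected {z : ℂ | ‖c‖ + 2 < ‖z‖} :=
    isConnected_setOf_lt_norm (by simp [Complex.rank_real_complex]) (by positivity)
  have hext_sub : ∀ n, {z : ℂ | ‖c‖ + 2 < ‖z‖} ⊆ {z | ‖c‖ + 2 < ‖f^[n] z‖} := fun n z hz =>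
    hz.trans_le (norm_le_norm_iterate hd c hz.le n)
  have hlevel : ∀ n, IsConnected {z | ‖c‖ + 2 < ‖f^[n] z‖} := fun n =>
    Complex.isConnected_setOf_lt_norm (((differentiable_pow d).add_const c).iterate n) hext
      (hext_sub n) ((isBounded_closedBall (x := 0) (r := ‖c‖ + 2)).subset fun z hz => by
        simpa using hz.2)
  obtain ⟨z, hz⟩ := hext.nonempty
  exact ⟨⟨z, mem_iUnion.2 ⟨0, hext_sub 0 hz⟩⟩,
    isPreconnected_iUnion ⟨z, mem_iInter.2 fun n => hext_sub n hz⟩ fun n => (hlevel n).2⟩
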